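/- Let G be a finite set, d ∈ ℕ with d ≥ 1, p ∈ ℕ with p ≥ 1, and σ : G → ℤ^d any map. For a ∈ ℝ^G define finitely supported functions c, v : ℤ^G × ℤ^d → ℝ by c(−e_m, σ(m)) = a_m and v(e_m, −σ(m)) = a_m for m ∈ G (and both zero elsewhere), where e_m denotes the standard basis vectors of ℤ^G. Then for every k ∈ G there exists a polynomial Q in the variables (X_m)_{m ∈ G} with real coefficients, independent of a, such that for all a ∈ ℝ^G: ((c ⋆ v)^{⋆p} ⋆ c)(−e_k, σ(k)) = a_k · Q((a_m²)_{m ∈ G}). In particular this quantity is odd in a_k and even in each a_m with m ≠ k. -/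

import Mathlib

open scoped BigOperators

noncomputable section

/-- Convolution of real-valued functions on a lattice `L`. -/
def convR {L : Type} [AddCommGroup L] (a b : L → ℝ) : L → ℝ :=
  fun m => ∑' k : L, a k * b (m - k)

/-- `p`-fold convolution power (`convPowR a 0` is the convolution identity δ₀). -/
def convPowR {L : Type} [AddCommGroup L] [DecidableEq L] (a : L → ℝ) : ℕ → (L → ℝ)
  | 0 => fun m => if m = 0 then 1 else 0
  | n + 1 => convR (convPowR a n) a

/-- The function `c` supported on `{(−e_m, σ(m)) : m ∈ G}` with values `a_m`. -/
def cFun {G : Type} [Fintype G] [DecidableEq G] {d : ℕ} (σ : G → Fin d → ℤ) (a : G → ℝ) :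
    (G → ℤ) × (Fin d → ℤ) → ℝ :=
  fun m => ∑ j : G, if m = (-(Pi.single j 1), σ j) then a j else 0

/-- The function `v` supported on `{(e_m, −σ(m)) : m ∈ G}` with values `a_m`. -/
def vFun {G : Type} [Fintype G] [DecidableEq G] {d : ℕ} (σ : G → Fin d → ℤ) (a : G → ℝ) :
    (G → ℤ) × (Fin d → ℤ) → ℝ :=
  fun m => ∑ j : G, if m = (Pi.single j 1, -(σ j)) then a j else 0

/-- The Q-equation value `((c ⋆ v)^{⋆p} ⋆ c)(−e_k, σ(k))`. -/
def Qval {G : Type} [Fintype G] [DecidableEq G] {d : ℕ} (σ : G → Fin d → ℤ) (p : ℕ)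
    (a : G → ℝ) (k : G) : ℝ :=
  convR (convPowR (convR (cFun σ a) (vFun σ a)) p) (cFun σ a) (-(Pi.single k 1), σ k)

/-!
Replace the coefficients `a_j` by indeterminates `X_j`: then `c` and `v` become elements of the
monoid algebra `ℝ[X][ℤ^G × ℤ^d]`, where convolution is multiplication, and the Q-value is the
evaluation at `a` of one coefficient `P` of `(c v)^p c`. Grade `ℝ[X]` by the parities of
exponents, in `(ℤ/2)^G`. Each `X_j` sits at a lattice point whose `ℤ^G`-component is `±e_j`, so
the coefficient at any lattice point `m` is homogeneous of parity `m mod 2`. At `(−e_k, σ(k))`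
this makes every monomial of `P` odd in `X_k` and even in all other variables, i.e.
`P = X_k · Q(X²)`.
-/

open MvPolynomial

namespace MvPolynomial

variable {σ R : Type*} [CommSemiring R] [DecidableEq σ]

def parityWeight (i : σ) : σ → ZMod 2 := Pi.single i 1

theorem weight_parityWeight_apply (u : σ →₀ ℕ) (j : σ) :
    Finsupp.weight parityWeight u j = u j := by
  rw [Finsupp.weight_apply, Finsupp.sum, Finset.sum_apply]
  simp +contextual [parityWeight, Pi.single_apply]

theorem exists_eq_monomial_mul_expand_two {P : MvPolynomial σ R} {t : σ →₀ ℕ}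
    (ht : ∀ i, t i < 2)
    (hP : IsWeightedHomogeneous parityWeight P (Finsupp.weight parityWeight t)) :
    ∃ Q, P = monomial t 1 * expand 2 Q := by
  have hsplit : ∀ u ∈ P.support, t + 2 • u.mapRange (· / 2) (Nat.zero_div 2) = u := by
    intro u hu
    ext i
    have hi := congrFun (hP (mem_support_iff.mp hu)) i
    rw [weight_parityWeight_apply, weight_parityWeight_apply,
      ZMod.natCast_eq_natCast_iff', Nat.mod_eq_of_lt (ht i)] at hi
    simp only [Finsupp.coe_add, Finsupp.coe_smul, Pi.add_apply, Pi.smul_apply,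
      Finsupp.mapRange_apply, smul_eq_mul]
    omega
  refine ⟨∑ u ∈ P.support, monomial (u.mapRange (· / 2) (Nat.zero_div 2)) (coeff u P), ?_⟩
  conv_lhs => rw [P.as_sum]
  simp only [map_sum, expand_monomial, Finset.mul_sum, monomial_mul, one_mul]
  exact Finset.sum_congr rfl fun u hu => by rw [hsplit u hu]

end MvPolynomial

namespace AddMonoidAlgebra

section Graded

variable {σ R L M : Type*} [CommSemiring R] [AddMonoid L] [AddCommMonoid M]

def gradedSubsemiring (w : σ → M) (ψ : L →+ M) :
    Subsemiring (AddMonoidAlgebra (MvPolynomial σ R) L) where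
  carrier := {x | ∀ m, IsWeightedHomogeneous w (x.coeff m) (ψ m)}
  mul_mem' {x y} hx hy m := by
    classical
    rw [coeff_mul]
    refine Submodule.sum_mem (weightedHomogeneousSubmodule R w (ψ m)) fun m₁ _ =>
      Submodule.sum_mem _ fun m₂ _ => ?_
    dsimp only
    split_ifs with h
    · rw [← h, map_add]
      exact (hx m₁).mul (hy m₂)
    · exact isWeightedHomogeneous_zero R w _
  one_mem' m := by
    classical
    rw [one_def, coeff_single, Finsupp.single_apply]
    split_ifs with h
    · rw [← h, map_zero]
      exact isWeightedHomogeneous_one R w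
    · exact isWeightedHomogeneous_zero R w _
  add_mem' hx hy m := (hx m).add (hy m)
  zero_mem' m := isWeightedHomogeneous_zero R w _

theorem single_mem_gradedSubsemiring {w : σ → M} {ψ : L →+ M} {m : L} {r : MvPolynomial σ R}
    (hr : IsWeightedHomogeneous w r (ψ m)) : single m r ∈ gradedSubsemiring w ψ := by
  intro m'
  classical
  rw [coeff_single, Finsupp.single_apply]
  split_ifs with h
  · rwa [← h]
  · exact isWeightedHomogeneous_zero R w _

end Graded

section Convolution

variable {S : Type*} {L : Type} [Semiring S] [AddCommGroup L]

theorem convR_comp_coeff (φ : S →+* ℝ) (x y : AddMonoidAlgebra S L) :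
    convR (φ ∘ x.coeff) (φ ∘ y.coeff) = φ ∘ (x * y).coeff := by
  funext m
  have hzero : ∀ k ∉ x.coeff.support, φ (x.coeff k) * φ (y.coeff (m - k)) = 0 := by
    intro k hk
    rw [Finsupp.notMem_support_iff.mp hk, map_zero, zero_mul]
  simp only [convR, Function.comp_apply, coeff_mul_apply_left, Finsupp.sum, map_sum, map_mul,
    neg_add_eq_sub]
  exact tsum_eq_sum hzero

theorem convPowR_comp_coeff [DecidableEq L] (φ : S →+* ℝ) (x : AddMonoidAlgebra S L)
    (n : ℕ) :
    convPowR (φ ∘ x.coeff) n = φ ∘ (x ^ n).coeff := by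
  induction n with
  | zero =>
    funext m
    simp [convPowR, one_def, Finsupp.single_apply, eq_comm]
  | succ n ih => rw [convPowR, ih, convR_comp_coeff, pow_succ]

end Convolution

section FormalSum

variable {ι R L : Type*} [Fintype ι] [CommSemiring R]

def formalSum (pt : ι → L) : AddMonoidAlgebra (MvPolynomial ι R) L :=
  ∑ j, single (pt j) (X j)

theorem eval_comp_coeff_formalSum [DecidableEq L] (pt : ι → L) (a : ι → R) :
    eval a ∘ (formalSum pt).coeff = fun m => ∑ j, if m = pt j then a j else 0 := by
  funext m
  simp [formalSum, coeff_sum, coeff_single, Finsupp.single_apply, apply_ite (eval a), eq_comm]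

theorem formalSum_mem_gradedSubsemiring [AddMonoid L] {M : Type*} [AddCommMonoid M]
    {w : ι → M} {ψ : L →+ M} {pt : ι → L} (hpt : ∀ j, ψ (pt j) = w j) :
    formalSum (R := R) pt ∈ gradedSubsemiring w ψ :=
  Subsemiring.sum_mem _ fun j _ =>
    single_mem_gradedSubsemiring (by rw [hpt]; exact isWeightedHomogeneous_X R w j)

end FormalSum

end AddMonoidAlgebra

open AddMonoidAlgebra

def parityGrading {G : Type} {d : ℕ} : (G → ℤ) × (Fin d → ℤ) →+ (G → ZMod 2) :=
  ((Int.castAddHom (ZMod 2)).compLeft G).comp (AddMonoidHom.fst _ _)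

section Lattice

variable {G : Type} [DecidableEq G] {d : ℕ}

def cPoint (σ : G → Fin d → ℤ) (j : G) : (G → ℤ) × (Fin d → ℤ) :=
  (-(Pi.single j 1), σ j)

def vPoint (σ : G → Fin d → ℤ) (j : G) : (G → ℤ) × (Fin d → ℤ) :=
  (Pi.single j 1, -(σ j))

theorem parityGrading_single (j : G) (n : ℤ) (y : Fin d → ℤ) :
    parityGrading (Pi.single j n, y) = Pi.single j (n : ZMod 2) := by
  funext i
  by_cases h : i = j
  · subst h; simp [parityGrading]
  · simp [parityGrading, h]

theorem parityGrading_cPoint (σ : G → Fin d → ℤ) (j : G) :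
    parityGrading (cPoint σ j) = parityWeight j := by
  rw [cPoint, ← Pi.single_neg, parityGrading_single, Int.cast_neg, Int.cast_one,
    ZMod.neg_eq_self_mod_two, parityWeight]

theorem parityGrading_vPoint (σ : G → Fin d → ℤ) (j : G) :
    parityGrading (vPoint σ j) = parityWeight j := by
  rw [vPoint, parityGrading_single, Int.cast_one, parityWeight]

theorem Qval_eq_eval_coeff [Fintype G] (σ : G → Fin d → ℤ) (p : ℕ) (a : G → ℝ)
    (k : G) :
    Qval σ p a k = eval a (((formalSum (cPoint σ) * formalSum (vPoint σ)) ^ p *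
      formalSum (cPoint σ)).coeff (cPoint σ k)) := by
  have hc : cFun σ a = eval a ∘ (formalSum (cPoint σ)).coeff :=
    (eval_comp_coeff_formalSum _ a).symm
  have hv : vFun σ a = eval a ∘ (formalSum (vPoint σ)).coeff :=
    (eval_comp_coeff_formalSum _ a).symm
  rw [Qval, hc, hv, convR_comp_coeff, convPowR_comp_coeff, convR_comp_coeff]
  rfl

end Lattice

theorem update_neg_sq {ι R : Type*} [DecidableEq ι] [Monoid R] [HasDistribNeg R]
    (a : ι → R) (i : ι) : (fun j => Function.update a i (-a i) j ^ 2) = fun j => a j ^ 2 := by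
  funext j
  rcases eq_or_ne j i with rfl | h
  · rw [Function.update_self, neg_sq]
  · rw [Function.update_of_ne h]

theorem stmt6_general (G : Type) [Fintype G] [DecidableEq G]
    (d p : ℕ) (σ : G → Fin d → ℤ) (k : G) :
    (∃ Q : MvPolynomial G ℝ, ∀ a : G → ℝ,
        Qval σ p a k = a k * MvPolynomial.eval (fun j => a j ^ 2) Q) ∧
    (∀ a : G → ℝ, Qval σ p (Function.update a k (-(a k))) k = -Qval σ p a k) ∧
    (∀ a : G → ℝ, ∀ j : G, j ≠ k →
        Qval σ p (Function.update a j (-(a j))) k = Qval σ p a k) := by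
  have hc := formalSum_mem_gradedSubsemiring (R := ℝ) (parityGrading_cPoint σ)
  have hv := formalSum_mem_gradedSubsemiring (R := ℝ) (parityGrading_vPoint σ)
  have hgraded := mul_mem (pow_mem (mul_mem hc hv) p) hc (cPoint σ k)
  rw [parityGrading_cPoint, ← one_smul ℕ (parityWeight k), ← Finsupp.weight_single] at hgraded
  obtain ⟨Q, hQ⟩ := exists_eq_monomial_mul_expand_two
    (fun i => by rw [Finsupp.single_apply]; split_ifs <;> norm_num) hgraded
  have hQval : ∀ a, Qval σ p a k = a k * eval (fun j => a j ^ 2) Q := fun a => by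
    rw [Qval_eq_eval_coeff, hQ, ← X, map_mul, eval_X, eval_expand]
    rfl
  refine ⟨⟨Q, hQval⟩, fun a => ?_, fun a j hjk => ?_⟩
  · rw [hQval, hQval, Function.update_self, update_neg_sq, neg_mul]
  · rw [hQval, hQval, Function.update_of_ne hjk.symm, update_neg_sq]

/-- Parity structure of the Q-equations: `((c ⋆ v)^{⋆p} ⋆ c)(−e_k, σ(k)) = a_k · Q({a_m²})`
for a polynomial `Q` independent of `a`; in particular the value is odd in `a_k` and even
in each `a_m`, `m ≠ k`. -/
theorem stmt6 (G : Type) [Fintype G] [DecidableEq G] [Nonempty G]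
    (d p : ℕ) (hd : 1 ≤ d) (hp : 1 ≤ p) (σ : G → Fin d → ℤ) (k : G) :
    (∃ Q : MvPolynomial G ℝ, ∀ a : G → ℝ,
        Qval σ p a k = a k * MvPolynomial.eval (fun j => a j ^ 2) Q) ∧
    (∀ a : G → ℝ, Qval σ p (Function.update a k (-(a k))) k = -Qval σ p a k) ∧
    (∀ a : G → ℝ, ∀ j : G, j ≠ k →
        Qval σ p (Function.update a j (-(a j))) k = Qval σ p a k) :=
  stmt6_general G d p σ k
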